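/- Let B ∈ W^{1,∞}(ℝ³;ℝ³), E ∈ C¹(ℝ³;ℝ³) bounded with bounded derivative, and ε, h̃ > 0. Let (z,w) solve ż = εw, ẇ = w × B(εz) + εE(z) on [τ_n, τ_n + h̃], and let (z̃, w̃) solve the frozen-field system ż̃ = εw̃, ẇ̃ = w̃ × B(εz(τ_n)) + εE(z̃) with the same initial data (z(τ_n), w(τ_n)) at s = 0. Then the differences η_z(s) = z(τ_n+s) − z̃(s) and η_w(s) = w(τ_n+s) − w̃(s) satisfy |η_z(h̃)| ≤ Cε³h̃³ and |η_w(h̃)| ≤ Cε²h̃², with C independent of ε and h̃ (for h̃ bounded and solutions bounded on the interval). -/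

import Mathlib

/-!
An energy estimate. For `η = w - w̃` the rotation term `(w - w̃) × B(εz)` drops out of
`d/ds ‖η‖²`, because the map `v ↦ v × b` is skew. What is left is a forcing term of size
`‖w̃‖ ‖B(εz(s)) - B(εz(0))‖ + ε ‖E(z) - E(z̃)‖ = O(ε² s)`, since positions move at speed `O(ε)`.
Hence `‖η_w(s)‖ = O(ε² s²)`, and integrating `η_z' = ε η_w` gives `‖η_z(s)‖ = O(ε³ s³)`.
-/

/-- Euclidean norm on `ℝ³`. -/
noncomputable def norm3 (v : Fin 3 → ℝ) : ℝ := Real.sqrt (∑ i, v i ^ 2)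

/-- Cross product on `ℝ³`. -/
def cross (u v : Fin 3 → ℝ) : Fin 3 → ℝ :=
  ![u 1 * v 2 - u 2 * v 1, u 2 * v 0 - u 0 * v 2, u 0 * v 1 - u 1 * v 0]

open Set
open scoped RealInnerProductSpace NNReal Matrix

section InnerProductSpace

variable {F : Type*} [NormedAddCommGroup F] [InnerProductSpace ℝ F]

theorem norm_le_of_inner_deriv_le {f f' : ℝ → F} {G g : ℝ → ℝ} {a b : ℝ}
    (hf : ContinuousOn f (Icc a b)) (hf' : ∀ x ∈ Ico a b, HasDerivWithinAt f (f' x) (Ici x) x)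
    (hG : ∀ x, HasDerivAt G (g x) x) (hG₀ : ∀ x ∈ Icc a b, 0 ≤ G x) (ha : ‖f a‖ ≤ G a)
    (bound : ∀ x ∈ Ico a b, ⟪f x, f' x⟫ ≤ ‖f x‖ * g x) :
    ∀ x ∈ Icc a b, ‖f x‖ ≤ G x := by
  intro x hx
  -- `‖f‖` need not be differentiable where `f` vanishes, but `‖f‖²` is; the barrier is
  -- strictly positive, so at a contact point `f ≠ 0` and `bound` applies.
  have barrier : ∀ δ > 0, ‖f x‖ ≤ G x + δ * (1 + (x - a)) := by
    intro δ hδ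
    set ψ : ℝ → ℝ := fun y => G y + δ * (1 + (y - a))
    have hψ : ∀ y, HasDerivAt ψ (g y + δ) y := fun y =>
      ((hG y).add ((((hasDerivAt_id y).sub_const a).const_add 1).const_mul δ)).congr_deriv
        (by ring)
    have hψ₀ : ∀ y ∈ Icc a b, 0 < ψ y := fun y hy => by
      have := hG₀ y hy
      have := sub_nonneg.2 hy.1
      positivity
    have hsq : ‖f x‖ ^ 2 ≤ ψ x ^ 2 := by
      refine image_le_of_deriv_right_lt_deriv_boundary' (B := fun y => ψ y ^ 2) (hf.norm.pow 2)
        (fun y hy => (hf' y hy).norm_sq) ?_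
        (fun y _ => ((hψ y).pow 2).continuousAt.continuousWithinAt)
        (fun y _ => ((hψ y).pow 2).hasDerivWithinAt) ?_ hx
      · have : ψ a = G a + δ := by simp [ψ]
        simp only [this]
        exact pow_le_pow_left₀ (norm_nonneg _) (by linarith) 2
      · intro y hy hcontact
        have hpos := hψ₀ y (Ico_subset_Icc_self hy)
        have hnorm : ‖f y‖ = ψ y :=
          (pow_left_inj₀ (norm_nonneg _) hpos.le two_ne_zero).1 hcontact
        have hinner := bound y hy
        rw [hnorm] at hinner
        have hgap := mul_pos hpos hδ
        linarith [show (2 : ℕ) * ψ y ^ (2 - 1) * (g y + δ) = 2 * (ψ y * g y) + 2 * (ψ y * δ) by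
          push_cast; ring]
    exact (pow_le_pow_iff_left₀ (norm_nonneg _) (hψ₀ x hx).le two_ne_zero).1 hsq
  refine le_of_forall_pos_le_add fun η hη => ?_
  have h1 : 0 < 1 + (x - a) := by linarith [sub_nonneg.2 hx.1]
  simpa [div_mul_cancel₀ _ h1.ne'] using barrier (η / (1 + (x - a))) (div_pos hη h1)

theorem inner_sub_le_of_skew {Ω : F → F →L[ℝ] F} {E : F → F} {KΩ KE : ℝ≥0}
    (hΩ : LipschitzWith KΩ Ω) (hskew : ∀ x v, ⟪v, Ω x v⟫ = 0) (hE : LipschitzWith KE E)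
    {ε : ℝ} (hε : 0 ≤ ε) (x x₀ v v₀ p p₀ : F) :
    ⟪v - v₀, (Ω x v + ε • E p) - (Ω x₀ v₀ + ε • E p₀)⟫ ≤
      ‖v - v₀‖ * (KΩ * ‖x - x₀‖ * ‖v₀‖ + ε * (KE * ‖p - p₀‖)) := by
  have hsplit : (Ω x v + ε • E p) - (Ω x₀ v₀ + ε • E p₀) =
      Ω x (v - v₀) + ((Ω x - Ω x₀) v₀ + ε • (E p - E p₀)) := by
    simp only [map_sub, sub_apply, smul_sub]
    abel
  rw [hsplit, inner_add_right, hskew, zero_add]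
  refine (real_inner_le_norm _ _).trans (mul_le_mul_of_nonneg_left ?_ (norm_nonneg _))
  refine (norm_add_le _ _).trans (add_le_add ?_ ?_)
  · exact ((Ω x - Ω x₀).le_opNorm v₀).trans
      (mul_le_mul_of_nonneg_right (hΩ.norm_sub_le x x₀) (norm_nonneg _))
  · rw [norm_smul, Real.norm_of_nonneg hε]
    exact mul_le_mul_of_nonneg_left (hE.norm_sub_le p p₀) hε

/-- The paper's magnetic term `w × B(εz)` is written `Ω (ε • z) w`, with each `Ω x` skew. -/
structure IsFrozenFieldPair (Ω : F → F →L[ℝ] F) (E : F → F) (ε t : ℝ) (z w zt wt : ℝ → F) :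
    Prop where
  hasDerivAt_z : ∀ s ∈ Icc 0 t, HasDerivAt z (ε • w s) s
  hasDerivAt_w : ∀ s ∈ Icc 0 t, HasDerivAt w (Ω (ε • z s) (w s) + ε • E (z s)) s
  hasDerivAt_zt : ∀ s ∈ Icc 0 t, HasDerivAt zt (ε • wt s) s
  hasDerivAt_wt : ∀ s ∈ Icc 0 t, HasDerivAt wt (Ω (ε • z 0) (wt s) + ε • E (zt s)) s
  zt_zero : zt 0 = z 0
  wt_zero : wt 0 = w 0

namespace IsFrozenFieldPair

variable {Ω : F → F →L[ℝ] F} {E : F → F} {KΩ KE : ℝ≥0} {ε t M : ℝ} {z w zt wt : ℝ → F}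

theorem norm_velocity_sub_le (h : IsFrozenFieldPair Ω E ε t z w zt wt)
    (hΩ : LipschitzWith KΩ Ω) (hskew : ∀ x v, ⟪v, Ω x v⟫ = 0) (hE : LipschitzWith KE E)
    (hε : 0 ≤ ε) (hM : ∀ s ∈ Icc 0 t, ‖w s‖ ≤ M ∧ ‖wt s‖ ≤ M) :
    ∀ s ∈ Icc 0 t, ‖w s - wt s‖ ≤ (KΩ * M ^ 2 + 2 * KE * M) / 2 * ε ^ 2 * s ^ 2 := by
  intro s hs
  have hM₀ : 0 ≤ M := (norm_nonneg _).trans (hM 0 ⟨le_rfl, hs.1.trans hs.2⟩).1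
  have drift_z : ∀ r ∈ Icc 0 t, ‖z r - z 0‖ ≤ ε * M * r := by
    simpa using norm_image_sub_le_of_norm_deriv_le_segment'
      (fun r hr => (h.hasDerivAt_z r hr).hasDerivWithinAt) fun r hr => by
        rw [norm_smul, Real.norm_of_nonneg hε]
        exact mul_le_mul_of_nonneg_left (hM r (Ico_subset_Icc_self hr)).1 hε
  have drift_sub : ∀ r ∈ Icc 0 t, ‖z r - zt r‖ ≤ ε * (2 * M) * r := by
    simpa [h.zt_zero] using norm_image_sub_le_of_norm_deriv_le_segment'
      (fun r hr => ((h.hasDerivAt_z r hr).sub (h.hasDerivAt_zt r hr)).hasDerivWithinAt)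
      fun r hr => by
        have := hM r (Ico_subset_Icc_self hr)
        rw [← smul_sub, norm_smul, Real.norm_of_nonneg hε]
        exact mul_le_mul_of_nonneg_left ((norm_sub_le _ _).trans (by linarith)) hε
  set K : ℝ := KΩ * M ^ 2 + 2 * KE * M
  refine norm_le_of_inner_deriv_le (G := fun r => K / 2 * ε ^ 2 * r ^ 2)
    (g := fun r => K * ε ^ 2 * r)
    (fun r hr => ((h.hasDerivAt_w r hr).sub (h.hasDerivAt_wt r hr)).continuousAt.continuousWithinAt)
    (fun r hr => ((h.hasDerivAt_w r (Ico_subset_Icc_self hr)).sub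
      (h.hasDerivAt_wt r (Ico_subset_Icc_self hr))).hasDerivWithinAt)
    (fun r => ((hasDerivAt_pow 2 r).const_mul (K / 2 * ε ^ 2)).congr_deriv (by ring))
    (fun r _ => by positivity) (by simp [h.wt_zero]) (fun r hr => ?_) s hs
  have hr := Ico_subset_Icc_self hr
  refine (inner_sub_le_of_skew hΩ hskew hE hε _ _ _ _ _ _).trans
    (mul_le_mul_of_nonneg_left ?_ (norm_nonneg _))
  rw [← smul_sub, norm_smul, Real.norm_of_nonneg hε]
  have hr₀ := hr.1
  calc (KΩ : ℝ) * (ε * ‖z r - z 0‖) * ‖wt r‖ + ε * (KE * ‖z r - zt r‖)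
      ≤ KΩ * (ε * (ε * M * r)) * M + ε * (KE * (ε * (2 * M) * r)) := by
        gcongr
        exacts [drift_z r hr, (hM r hr).2, drift_sub r hr]
    _ = K * ε ^ 2 * r := by ring

theorem norm_position_sub_le (h : IsFrozenFieldPair Ω E ε t z w zt wt)
    (hΩ : LipschitzWith KΩ Ω) (hskew : ∀ x v, ⟪v, Ω x v⟫ = 0) (hE : LipschitzWith KE E)
    (hε : 0 ≤ ε) (hM : ∀ s ∈ Icc 0 t, ‖w s‖ ≤ M ∧ ‖wt s‖ ≤ M) :
    ∀ s ∈ Icc 0 t, ‖z s - zt s‖ ≤ (KΩ * M ^ 2 + 2 * KE * M) / 6 * ε ^ 3 * s ^ 3 := by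
  intro s hs
  set K : ℝ := KΩ * M ^ 2 + 2 * KE * M
  refine image_norm_le_of_norm_deriv_right_le_deriv_boundary (f := fun r => z r - zt r)
    (B := fun r => K / 6 * ε ^ 3 * r ^ 3) (B' := fun r => K / 2 * ε ^ 3 * r ^ 2)
    (fun r hr => ((h.hasDerivAt_z r hr).sub (h.hasDerivAt_zt r hr)).continuousAt.continuousWithinAt)
    (fun r hr => ((h.hasDerivAt_z r (Ico_subset_Icc_self hr)).sub
      (h.hasDerivAt_zt r (Ico_subset_Icc_self hr))).hasDerivWithinAt)
    (by simp [h.zt_zero])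
    (fun r => ((hasDerivAt_pow 3 r).const_mul (K / 6 * ε ^ 3)).congr_deriv (by ring))
    (fun r hr => ?_) hs
  rw [← smul_sub, norm_smul, Real.norm_of_nonneg hε]
  calc ε * ‖w r - wt r‖ ≤ ε * (K / 2 * ε ^ 2 * r ^ 2) :=
        mul_le_mul_of_nonneg_left
          (h.norm_velocity_sub_le hΩ hskew hE hε hM r (Ico_subset_Icc_self hr)) hε
    _ = K / 2 * ε ^ 3 * r ^ 2 := by ring

end IsFrozenFieldPair

end InnerProductSpace

section EuclideanSpace

open WithLp

local notation "ℝ³" => EuclideanSpace ℝ (Fin 3)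

theorem norm3_eq_norm_toLp (v : Fin 3 → ℝ) : norm3 v = ‖toLp 2 v‖ := by
  simp [EuclideanSpace.norm_eq, norm3]

theorem cross_eq_crossProduct (u v : Fin 3 → ℝ) : cross u v = u ⨯₃ v := rfl

theorem norm3_cross_le (u v : Fin 3 → ℝ) : norm3 (cross u v) ≤ norm3 u * norm3 v := by
  unfold norm3
  rw [← Real.sqrt_mul (by positivity)]
  refine Real.sqrt_le_sqrt ?_
  simp only [cross, Fin.sum_univ_three, Matrix.cons_val]
  nlinarith [sq_nonneg (u 0 * v 0 + u 1 * v 1 + u 2 * v 2)]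

noncomputable def crossRightL : ℝ³ →L[ℝ] ℝ³ →L[ℝ] ℝ³ :=
  LinearMap.mkContinuous₂
    ((crossProduct.flip.compl₁₂ (WithLp.linearEquiv 2 ℝ (Fin 3 → ℝ)).toLinearMap
      (WithLp.linearEquiv 2 ℝ (Fin 3 → ℝ)).toLinearMap).compr₂
        (WithLp.linearEquiv 2 ℝ (Fin 3 → ℝ)).symm.toLinearMap)
    1 fun b v => by
      have := norm3_cross_le (ofLp v) (ofLp b)
      simp only [norm3_eq_norm_toLp, toLp_ofLp] at this
      simpa [cross_eq_crossProduct, mul_comm] using this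

theorem crossRightL_apply (b v : ℝ³) : crossRightL b v = toLp 2 (cross (ofLp v) (ofLp b)) := rfl

theorem inner_crossRightL_self (b v : ℝ³) : ⟪v, crossRightL b v⟫ = 0 := by
  rw [crossRightL_apply, ← toLp_ofLp 2 v, EuclideanSpace.inner_toLp_toLp, ofLp_toLp,
    cross_eq_crossProduct, dotProduct_comm]
  exact dot_self_cross _ _

theorem lipschitzWith_crossRightL_comp {K : ℝ≥0} {B : ℝ³ → ℝ³} (hB : LipschitzWith K B) :
    LipschitzWith K fun x => crossRightL (B x) :=
  (crossRightL.lipschitz.comp hB).weaken <|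
    mul_le_of_le_one_left K.coe_nonneg (LinearMap.mkContinuous₂_norm_le _ zero_le_one _)

/-- `Fin 3 → ℝ` carries the sup norm, hence the factor `√3`. -/
theorem lipschitzWith_toLp_comp_ofLp {K : ℝ≥0} {f : (Fin 3 → ℝ) → Fin 3 → ℝ}
    (hf : LipschitzWith K f) :
    LipschitzWith (NNReal.sqrt 3 * K) fun x : ℝ³ => toLp 2 (f (ofLp x)) := by
  have := ((PiLp.lipschitzWith_toLp 2 fun _ : Fin 3 => ℝ).comp hf).comp
    (PiLp.lipschitzWith_ofLp 2 fun _ : Fin 3 => ℝ)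
  convert this using 1
  · simp [NNReal.sqrt_eq_rpow]
  · rfl

theorem isFrozenFieldPair_toLp {B E : (Fin 3 → ℝ) → Fin 3 → ℝ} {z w zt wt : ℝ → Fin 3 → ℝ}
    {ε t : ℝ}
    (hzw : ∀ s ∈ Icc 0 t, HasDerivAt z (ε • w s) s ∧
      HasDerivAt w (cross (w s) (B (ε • z s)) + ε • E (z s)) s)
    (hzwt : ∀ s ∈ Icc 0 t, HasDerivAt zt (ε • wt s) s ∧
      HasDerivAt wt (cross (wt s) (B (ε • z 0)) + ε • E (zt s)) s)
    (hz0 : zt 0 = z 0) (hw0 : wt 0 = w 0) :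
    IsFrozenFieldPair (fun x => crossRightL (toLp 2 (B (ofLp x)))) (fun x => toLp 2 (E (ofLp x)))
      ε t (fun s => toLp 2 (z s)) (fun s => toLp 2 (w s)) (fun s => toLp 2 (zt s))
      (fun s => toLp 2 (wt s)) := by
  have lift {f : ℝ → Fin 3 → ℝ} {f' : Fin 3 → ℝ} {s : ℝ} (h : HasDerivAt f f' s) :
      HasDerivAt (fun s => toLp 2 (f s) : ℝ → ℝ³) (toLp 2 f') s :=
    (PiLp.hasFDerivAt_toLp 2 (f s)).comp_hasDerivAt s h
  refine ⟨fun s hs => ?_, fun s hs => ?_, fun s hs => ?_, fun s hs => ?_, by rw [hz0],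
    by rw [hw0]⟩
  · simpa using lift (hzw s hs).1
  · simpa [crossRightL_apply] using lift (hzw s hs).2
  · simpa using lift (hzwt s hs).1
  · simpa [crossRightL_apply] using lift (hzwt s hs).2

end EuclideanSpace

theorem frozen_field_truncation_general (LB ME MD Mw hmax : ℝ)
    (hMw : 0 ≤ Mw) :
    ∃ C > 0, ∀ (ε ht : ℝ), 0 < ε → 0 < ht → ht ≤ hmax →
      ∀ (B E : (Fin 3 → ℝ) → Fin 3 → ℝ) (z w zt wt : ℝ → Fin 3 → ℝ),
      LipschitzWith (Real.toNNReal LB) B →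
      ContDiff ℝ 1 E →
      (∀ x, norm3 (E x) ≤ ME) →
      LipschitzWith (Real.toNNReal MD) E →
      (∀ s ∈ Set.Icc (0:ℝ) ht, HasDerivAt z (ε • w s) s ∧
        HasDerivAt w (cross (w s) (B (ε • z s)) + ε • E (z s)) s) →
      (∀ s ∈ Set.Icc (0:ℝ) ht, HasDerivAt zt (ε • wt s) s ∧
        HasDerivAt wt (cross (wt s) (B (ε • z 0)) + ε • E (zt s)) s) →
      zt 0 = z 0 → wt 0 = w 0 →
      (∀ s ∈ Set.Icc (0:ℝ) ht, norm3 (w s) ≤ Mw ∧ norm3 (wt s) ≤ Mw) →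
      norm3 (z ht - zt ht) ≤ C * ε ^ 3 * ht ^ 3 ∧
      norm3 (w ht - wt ht) ≤ C * ε ^ 2 * ht ^ 2 := by
  set K : ℝ := ((NNReal.sqrt 3 * LB.toNNReal : ℝ≥0) : ℝ) * Mw ^ 2 +
    2 * ((NNReal.sqrt 3 * MD.toNNReal : ℝ≥0) : ℝ) * Mw
  have hK : 0 ≤ K := by positivity
  refine ⟨K / 2 + 1, by positivity, fun ε ht hε hht _ B E z w zt wt hB _ _ hE hzw hzwt hz0 hw0
    hbd => ?_⟩
  have hpair := isFrozenFieldPair_toLp hzw hzwt hz0 hw0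
  have hΩ := lipschitzWith_crossRightL_comp (lipschitzWith_toLp_comp_ofLp hB)
  have hM : ∀ s ∈ Icc 0 ht, ‖WithLp.toLp 2 (w s)‖ ≤ Mw ∧ ‖WithLp.toLp 2 (wt s)‖ ≤ Mw := by
    simpa only [norm3_eq_norm_toLp] using hbd
  have hend : ht ∈ Icc 0 ht := right_mem_Icc.2 hht.le
  have hE' := lipschitzWith_toLp_comp_ofLp hE
  have hz := hpair.norm_position_sub_le hΩ (fun _ => inner_crossRightL_self _) hE' hε.le hM ht hend
  have hw := hpair.norm_velocity_sub_le hΩ (fun _ => inner_crossRightL_self _) hE' hε.le hM ht hend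
  rw [norm3_eq_norm_toLp, norm3_eq_norm_toLp, WithLp.toLp_sub, WithLp.toLp_sub]
  constructor
  · exact hz.trans (by gcongr; linarith)
  · exact hw.trans (by gcongr; linarith)

/-- Local truncation error of freezing the magnetic field at the left endpoint:
`|η_z(ht)| ≤ C ε³ ht³` and `|η_w(ht)| ≤ C ε² ht²`, with `C` independent of `ε` and `ht`
(for `ht` bounded and solutions bounded). -/
theorem frozen_field_truncation (LB ME MD Mw hmax : ℝ)
    (hLB : 0 ≤ LB) (hME : 0 ≤ ME) (hMD : 0 ≤ MD) (hMw : 0 ≤ Mw) (hmaxpos : 0 < hmax) :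
    ∃ C > 0, ∀ (ε ht : ℝ), 0 < ε → 0 < ht → ht ≤ hmax →
      ∀ (B E : (Fin 3 → ℝ) → Fin 3 → ℝ) (z w zt wt : ℝ → Fin 3 → ℝ),
      LipschitzWith (Real.toNNReal LB) B →
      ContDiff ℝ 1 E →
      (∀ x, norm3 (E x) ≤ ME) →
      LipschitzWith (Real.toNNReal MD) E →
      (∀ s ∈ Set.Icc (0:ℝ) ht, HasDerivAt z (ε • w s) s ∧
        HasDerivAt w (cross (w s) (B (ε • z s)) + ε • E (z s)) s) →
      (∀ s ∈ Set.Icc (0:ℝ) ht, HasDerivAt zt (ε • wt s) s ∧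
        HasDerivAt wt (cross (wt s) (B (ε • z 0)) + ε • E (zt s)) s) →
      zt 0 = z 0 → wt 0 = w 0 →
      (∀ s ∈ Set.Icc (0:ℝ) ht, norm3 (w s) ≤ Mw ∧ norm3 (wt s) ≤ Mw) →
      norm3 (z ht - zt ht) ≤ C * ε ^ 3 * ht ^ 3 ∧
      norm3 (w ht - wt ht) ≤ C * ε ^ 2 * ht ^ 2 :=
  frozen_field_truncation_general LB ME MD Mw hmax hMw
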